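/- Let (I,J) ∈ O, let y ∈ A_{I,J}, and for t ∈ [0,1] set y_t = (1−t)y + tb. Then δ^{ẏ_t} = (1−t)·δ^{ẏ} + t·(1/(2n)). -/

import Mathlib

open Finset

/-- The maximum of `|z i - z j|` over `j ∈ S`, with the convention `max ∅ = 0`. -/
noncomputable def maxDist {n : ℕ} (z : Fin n → ℝ) (i : Fin n) (S : Finset (Fin n)) : ℝ :=
  if h : S.Nonempty then S.sup' h (fun j => |z i - z j|) else 0

/-- `ν^z_{I,i}`: the minimum over all subsets `S ⊆ I \ {i}` with `|S| = ⌊n/3⌋` of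
`max_{j ∈ S} |z i - z j|`, with the convention `min ∅ = 0`. -/
noncomputable def nu (n : ℕ) (z : Fin n → ℝ) (I : Finset (Fin n)) (i : Fin n) : ℝ :=
  if h : ((I.erase i).powersetCard (n / 3)).Nonempty then
    ((I.erase i).powersetCard (n / 3)).inf' h (maxDist z i)
  else 0

/-- `ν^z_I = max_{i ∈ I} ν^z_{I,i}`, with the convention `max ∅ = 0`. -/
noncomputable def nuMax (n : ℕ) (z : Fin n → ℝ) (I : Finset (Fin n)) : ℝ :=
  if h : I.Nonempty then I.sup' h (nu n z I) else 0

/-- `δ^z = (max{t₁,…,tₙ} - min{t₁,…,tₙ}) / n`. -/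
noncomputable def delta (n : ℕ) (z : Fin n → ℝ) : ℝ :=
  if h : (Finset.univ : Finset (Fin n)).Nonempty then
    (Finset.univ.sup' h z - Finset.univ.inf' h z) / n
  else 0

/-- `ẏ = (t₁, …, t_{n-1}, 0) ∈ ℝⁿ` for `y = (t₁, …, t_{n-1}) ∈ ℝ^{n-1}`. -/
def ydot (n : ℕ) (y : Fin (n - 1) → ℝ) : Fin n → ℝ :=
  fun i => if h : (i : ℕ) < n - 1 then y ⟨i, h⟩ else 0

/-- The open cube `(-1, 1)^m`, the interior of `D^m = [-1,1]^m`. -/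
def IntD (m : ℕ) : Set (Fin m → ℝ) := {y | ∀ i, y i ∈ Set.Ioo (-1 : ℝ) 1}

/-- `(I, J) ∈ O`: `I` and `J` are disjoint nonempty subsets of `[n]` with `I ∪ J = [n]`,
`|I| > n/3`, and `|J| > n/3`. -/
def memO (n : ℕ) (I J : Finset (Fin n)) : Prop :=
  I.Nonempty ∧ J.Nonempty ∧ Disjoint I J ∧ I ∪ J = Finset.univ ∧
    (n : ℝ) < 3 * I.card ∧ (n : ℝ) < 3 * J.card

/-- The set `A_{I,J}`. -/
def setAIJ (n : ℕ) (I J : Finset (Fin n)) : Set (Fin (n - 1) → ℝ) :=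
  {y | y ∈ IntD (n - 1) ∧ ∀ i ∈ I, ∀ j ∈ J,
    delta n (ydot n y) < ydot n y j - ydot n y i ∧
    nu n (ydot n y) I i < delta n (ydot n y) ∧
    nu n (ydot n y) J j < delta n (ydot n y)}

/-- The set `A = { y ∈ Int(D^{n-1}) : ν^{ẏ}_{[n]} < δ^{ẏ} }`. -/
def setA (n : ℕ) : Set (Fin (n - 1) → ℝ) :=
  {y | y ∈ IntD (n - 1) ∧ nuMax n (ydot n y) Finset.univ < delta n (ydot n y)}

/-- The point `b ∈ ℝ^{n-1}` associated to `(I, J) ∈ O`: if `n ∈ J` then `b_i = -1/2` for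
`i ∈ I` and `b_j = 0` for `j ∈ J \ {n}`; if `n ∈ I` then `b_i = 0` for `i ∈ I \ {n}` and
`b_j = 1/2` for `j ∈ J`. -/
noncomputable def bpt (n : ℕ) (I J : Finset (Fin n)) : Fin (n - 1) → ℝ :=
  fun i =>
    if (⟨n - 1, by have := i.isLt; omega⟩ : Fin n) ∈ J then
      (if Fin.castLE (Nat.sub_le n 1) i ∈ I then -(1 / 2 : ℝ) else 0)
    else
      (if Fin.castLE (Nat.sub_le n 1) i ∈ I then 0 else (1 / 2 : ℝ))


/-! Each coordinate of `ẏ` indexed by `I` lies below each one indexed by `J`, so `ẏ` attains its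
maximum at some `j ∈ J` and its minimum at some `i ∈ I`. The vector `ḃ` is constant on `I` and on
`J`, with a gap of `1/2`, so it is maximal at `j` and minimal at `i` as well. A nonnegative
combination of two functions with a common argmax and argmin has them too, so the spread
`max - min` of `ẏ_t` is `(1 - t)` times that of `ẏ` plus `t / 2`. -/

@[simp]
lemma ydot_add (n : ℕ) (y y' : Fin (n - 1) → ℝ) : ydot n (y + y') = ydot n y + ydot n y' := by
  funext k
  by_cases hk : (k : ℕ) < n - 1 <;> simp [ydot, hk]

@[simp]
lemma ydot_smul (n : ℕ) (a : ℝ) (y : Fin (n - 1) → ℝ) : ydot n (a • y) = a • ydot n y := by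
  funext k
  by_cases hk : (k : ℕ) < n - 1 <;> simp [ydot, hk]

lemma delta_nonneg (n : ℕ) (z : Fin n → ℝ) : 0 ≤ delta n z := by
  unfold delta
  split_ifs with h
  · obtain ⟨k, hk⟩ := h
    exact div_nonneg (sub_nonneg.2 ((inf'_le z hk).trans (le_sup' z hk))) n.cast_nonneg
  · rfl

lemma delta_eq_of_isMaxOn_of_isMinOn {n : ℕ} {z : Fin n → ℝ} {p q : Fin n}
    (hp : IsMaxOn z Set.univ p) (hq : IsMinOn z Set.univ q) :
    delta n z = (z p - z q) / n := by
  have hne : (univ : Finset (Fin n)).Nonempty := ⟨p, mem_univ p⟩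
  have hsup : univ.sup' hne z = z p :=
    le_antisymm (sup'_le _ _ fun k _ => isMaxOn_univ_iff.1 hp k) (le_sup' z (mem_univ p))
  have hinf : univ.inf' hne z = z q :=
    le_antisymm (inf'_le z (mem_univ q)) (le_inf' _ _ fun k _ => isMinOn_univ_iff.1 hq k)
  rw [delta, dif_pos hne, hsup, hinf]

lemma exists_mem_isMaxOn_of_le {ι α : Type*} [LinearOrder α] {I J : Finset ι}
    (hcover : ∀ k, k ∈ I ∨ k ∈ J) (hJ : J.Nonempty) {f : ι → α}
    (hle : ∀ i ∈ I, ∀ j ∈ J, f i ≤ f j) : ∃ j ∈ J, IsMaxOn f Set.univ j := by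
  obtain ⟨j, hj, hmax⟩ := J.exists_max_image f hJ
  refine ⟨j, hj, isMaxOn_univ_iff.2 fun k => ?_⟩
  rcases hcover k with hk | hk
  · exact hle k hk j hj
  · exact hmax k hk

lemma exists_mem_isMinOn_of_le {ι α : Type*} [LinearOrder α] {I J : Finset ι}
    (hcover : ∀ k, k ∈ I ∨ k ∈ J) (hI : I.Nonempty) {f : ι → α}
    (hle : ∀ i ∈ I, ∀ j ∈ J, f i ≤ f j) : ∃ i ∈ I, IsMinOn f Set.univ i :=
  exists_mem_isMaxOn_of_le (α := αᵒᵈ) (fun k => (hcover k).symm) hI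
    fun j hj i hi => hle i hi j hj

lemma IsMaxOn.smul_add_smul {ι : Type*} {f g : ι → ℝ} {s : Set ι} {a : ι}
    (hf : IsMaxOn f s a) (hg : IsMaxOn g s a) {u v : ℝ} (hu : 0 ≤ u) (hv : 0 ≤ v) :
    IsMaxOn (u • f + v • g) s a :=
  (hf.comp_mono (monotone_mul_left_of_nonneg hu)).add
    (hg.comp_mono (monotone_mul_left_of_nonneg hv))

lemma IsMinOn.smul_add_smul {ι : Type*} {f g : ι → ℝ} {s : Set ι} {a : ι}
    (hf : IsMinOn f s a) (hg : IsMinOn g s a) {u v : ℝ} (hu : 0 ≤ u) (hv : 0 ≤ v) :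
    IsMinOn (u • f + v • g) s a :=
  (hf.comp_mono (monotone_mul_left_of_nonneg hu)).add
    (hg.comp_mono (monotone_mul_left_of_nonneg hv))

lemma exists_ydot_bpt_eq {n : ℕ} {I J : Finset (Fin n)} (hdisj : Disjoint I J)
    (hunion : I ∪ J = univ) :
    ∃ β : ℝ, ydot n (bpt n I J) = fun k => β + if k ∈ I then 0 else 1 / 2 := by
  rcases n with _ | m
  · exact ⟨0, funext fun k => k.elim0⟩
  have hmemJ : ∀ k, k ∈ J ↔ k ∉ I := fun k =>
    ⟨fun hkJ hkI => disjoint_left.1 hdisj hkI hkJ,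
      (mem_union.1 (hunion ▸ mem_univ k)).resolve_left⟩
  refine ⟨if Fin.last m ∈ J then -1 / 2 else 0, funext fun k => ?_⟩
  by_cases hk : (k : ℕ) < m
  · have hcast : Fin.castLE (Nat.sub_le (m + 1) 1) ⟨k, hk⟩ = k := rfl
    have hlast : (⟨m, m.lt_succ_self⟩ : Fin (m + 1)) = Fin.last m := rfl
    simp only [ydot, bpt, Nat.add_sub_cancel, hk, dif_pos, hcast, hlast]
    split_ifs <;> norm_num
  · obtain rfl : k = Fin.last m := Fin.ext (by rw [Fin.val_last]; omega)
    simp only [ydot, Fin.val_last, Nat.add_sub_cancel, lt_irrefl, dif_neg, not_false_iff, hmemJ]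
    split_ifs <;> norm_num

theorem stmt_8_general (n : ℕ) (I J : Finset (Fin n)) (hIJ : memO n I J)
    (y : Fin (n - 1) → ℝ) (hy : y ∈ setAIJ n I J) (t : ℝ) (ht : t ∈ Set.Icc (0 : ℝ) 1) :
    delta n (ydot n ((1 - t) • y + t • bpt n I J)) =
      (1 - t) * delta n (ydot n y) + t * (1 / (2 * n)) := by
  obtain ⟨hI, hJ, hdisj, hunion, -, -⟩ := hIJ
  have hcover : ∀ k, k ∈ I ∨ k ∈ J := fun k => mem_union.1 (hunion ▸ mem_univ k)
  obtain ⟨β, hc⟩ := exists_ydot_bpt_eq hdisj hunion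
  set z := ydot n y
  set c := ydot n (bpt n I J)
  have hle : ∀ i ∈ I, ∀ j ∈ J, z i ≤ z j := fun i hi j hj => by
    linarith [(hy.2 i hi j hj).1, delta_nonneg n z]
  obtain ⟨j, hj, hzmax⟩ := exists_mem_isMaxOn_of_le hcover hJ hle
  obtain ⟨i, hi, hzmin⟩ := exists_mem_isMinOn_of_le hcover hI hle
  have hjI : j ∉ I := disjoint_right.1 hdisj hj
  have hcmax : IsMaxOn c Set.univ j := isMaxOn_univ_iff.2 fun k => by
    simp only [hc]; split_ifs <;> norm_num
  have hcmin : IsMinOn c Set.univ i := isMinOn_univ_iff.2 fun k => by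
    simp only [hc]; split_ifs <;> norm_num
  have ht' : 0 ≤ 1 - t := sub_nonneg.2 ht.2
  rw [ydot_add, ydot_smul, ydot_smul,
    delta_eq_of_isMaxOn_of_isMinOn (hzmax.smul_add_smul hcmax ht' ht.1)
      (hzmin.smul_add_smul hcmin ht' ht.1),
    delta_eq_of_isMaxOn_of_isMinOn hzmax hzmin]
  have hgap : c j - c i = 1 / 2 := by simp [hc, hi, hjI]
  simp only [Pi.add_apply, Pi.smul_apply, smul_eq_mul]
  linear_combination (t / n) * hgap

/-- For `(I,J) ∈ O`, `y ∈ A_{I,J}` and `t ∈ [0,1]`, with `y_t = (1-t)y + tb`, one has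
`δ^{ẏ_t} = (1-t)·δ^{ẏ} + t·(1/(2n))`. -/
theorem stmt_8 (n : ℕ) (hn : 2 ≤ n) (I J : Finset (Fin n)) (hIJ : memO n I J)
    (y : Fin (n - 1) → ℝ) (hy : y ∈ setAIJ n I J) (t : ℝ) (ht : t ∈ Set.Icc (0 : ℝ) 1) :
    delta n (ydot n ((1 - t) • y + t • bpt n I J)) =
      (1 - t) * delta n (ydot n y) + t * (1 / (2 * n)) :=
  stmt_8_general n I J hIJ y hy t ht
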